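/- Let λ be a partition of n = p + q with ℓ parts and set λ_{ℓ+1} = 0. Suppose 1 ≤ h ≤ ℓ satisfies λ_h − λ_{h+1} ≥ 2, and let λ' = (λ_1 − 2, …, λ_h − 2, λ_{h+1}, …, λ_ℓ) (discarding parts equal to 0), i.e., λ' is obtained from λ by removing two successive columns of the same length h. Then the number of connected components of Γ(λ;p,q) equals the number of connected components of Γ(λ'; p−h, q−h). (If λ' is the empty partition, then Γ(λ';p−h,q−h) is interpreted as the one-point graph when p = q = h and the empty graph otherwise.) -/

import Mathlib

open Finset

/-- A partition of `n`, given by the function `l` listing its parts in weakly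
decreasing order: `l j = λ_j` is the `j`-th part for `1 ≤ j ≤ len`, and
`l j = 0` for `j > len`. -/
structure PartitionData : Type where
  l : ℕ → ℕ
  len : ℕ
  anti : ∀ j, 1 ≤ j → l (j + 1) ≤ l j
  pos : ∀ j, 1 ≤ j → (0 < l j ↔ j ≤ len)

namespace PartitionData

/-- The multiplicity `m(i)` of `i` as a part of the partition. -/
def mult (P : PartitionData) (i : ℕ) : ℕ :=
  ((Finset.Icc 1 P.len).filter (fun j => P.l j = i)).card

/-- The finite set of (distinct) parts of the partition. -/
def partsSet (P : PartitionData) : Finset ℕ :=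
  (Finset.Icc 1 P.len).image P.l

/-- The sum of the parts (i.e. the number `n` the partition partitions). -/
def boxSum (P : PartitionData) : ℕ := ∑ j ∈ Finset.Icc 1 P.len, P.l j

/-- The number of odd parts of the partition. -/
def oddCount (P : PartitionData) : ℕ :=
  ((Finset.Icc 1 P.len).filter (fun j => Odd (P.l j))).card

end PartitionData

/-- A signed Young diagram of shape `P` and signature `(p, q)`, encoded by the
function `f` sending each part length `i` to `m_T⁺(i)`, the number of rows of
length `i` whose leading sign is `+`.  A row of length `i` with leading sign
`+` has `(i+1)/2` plus-boxes and `i/2` minus-boxes, and vice versa. -/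
structure SYD (P : PartitionData) (p q : ℕ) : Type where
  f : ℕ → ℕ
  le_mult : ∀ i, f i ≤ P.mult i
  plus_eq : ∑ i ∈ P.partsSet, (f i * ((i + 1) / 2) + (P.mult i - f i) * (i / 2)) = p
  minus_eq : ∑ i ∈ P.partsSet, (f i * (i / 2) + (P.mult i - f i) * ((i + 1) / 2)) = q

/-- `i` and `j` are consecutive distinct parts: `i > j` with no part strictly
in between (so if the distinct parts are `i_1 > ⋯ > i_k`, the pairs are
`(i_r, i_{r+1})`). -/
def Consec (P : PartitionData) (i j : ℕ) : Prop :=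
  i ∈ P.partsSet ∧ j ∈ P.partsSet ∧ j < i ∧ ∀ x ∈ P.partsSet, ¬ (j < x ∧ x < i)

/-- `j` is the smallest part `i_k`. -/
def IsMinPart (P : PartitionData) (j : ℕ) : Prop :=
  j ∈ P.partsSet ∧ ∀ x ∈ P.partsSet, j ≤ x

/-- Adjacency of signed Young diagrams with step `c`:
`π(T) - π(T') ∈ {±c(e_r - e_{r+1})} ∪ {±c e_k}` in the coordinates indexed by
the distinct parts `i_1 > ⋯ > i_k`. -/
def AdjRel (P : PartitionData) {p q : ℕ} (c : ℕ) (T T' : SYD P p q) : Prop :=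
  (∃ i j, Consec P i j ∧ (∀ x, x ≠ i → x ≠ j → T.f x = T'.f x) ∧
    ((T.f i = T'.f i + c ∧ T'.f j = T.f j + c) ∨
      (T'.f i = T.f i + c ∧ T.f j = T'.f j + c)))
  ∨ (∃ j, IsMinPart P j ∧ (∀ x, x ≠ j → T.f x = T'.f x) ∧
      (T.f j = T'.f j + c ∨ T'.f j = T.f j + c))

/-- The orbit graph `Γ(λ;p,q)` (type AIII). -/
def orbitGraph (P : PartitionData) (p q : ℕ) : SimpleGraph (SYD P p q) :=
  SimpleGraph.fromRel (AdjRel P 1)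

/-!
Shorten every row of length `x` to length `σ x`, by an even number of boxes and without reordering
the rows. Both signs lose the same number `d` of boxes, and adding up `m⁺` over the fibres of `σ`
gives a surjection `syd(λ; p, q) → syd(λ'; p - d, q - d)`. An edge of the orbit graph moves one
leading `+` between consecutive parts (of equal parity, by the signature), or flips one row of the
smallest part (which must be even); its image is an edge or a point. Conversely, the fibres of `σ`
are runs of consecutive parts of one parity, plus even parts sent to `0` at the bottom, and a
leading `+` can be walked along such a run. This connects diagrams with the same image and lifts
every edge of `Γ(λ')` to a path of `Γ(λ)`, so the map is a bijection on connected components.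
Removing two columns of height `h` shortens by two exactly the rows longer than `λ_{h+1}`, and
then `d = h`.
-/

theorem mul_half_add_mul_half (a b i : ℕ) :
    a * ((i + 1) / 2) + b * (i / 2) = a * (i % 2) + (a + b) * (i / 2) := by
  have : (i + 1) / 2 = i / 2 + i % 2 := by omega
  rw [this]
  ring

theorem mul_half_add_mul_half_of_le (a b s x : ℕ) (hs : s ≤ x) (hpar : s % 2 = x % 2) :
    a * ((x + 1) / 2) + b * (x / 2) =
      a * ((s + 1) / 2) + b * (s / 2) + (a + b) * ((x - s) / 2) := by
  have h₁ : (x + 1) / 2 = (s + 1) / 2 + (x - s) / 2 := by omega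
  have h₂ : x / 2 = s / 2 + (x - s) / 2 := by omega
  rw [h₁, h₂]
  ring

namespace PartitionData

variable {P : PartitionData}

theorem mem_partsSet {x : ℕ} : x ∈ P.partsSet ↔ ∃ j, 1 ≤ j ∧ j ≤ P.len ∧ P.l j = x := by
  simp [partsSet, and_assoc]

theorem pos_of_mem_partsSet {x : ℕ} (hx : x ∈ P.partsSet) : 0 < x := by
  obtain ⟨j, hj, hjlen, rfl⟩ := mem_partsSet.1 hx
  exact (P.pos j hj).2 hjlen

theorem l_antitone {j j' : ℕ} (hj : 1 ≤ j) (hjj' : j ≤ j') : P.l j' ≤ P.l j := by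
  induction j', hjj' using Nat.le_induction with
  | base => exact le_rfl
  | succ k hk ih => exact (P.anti k (hj.trans hk)).trans ih

theorem mult_pos_iff {x : ℕ} : 0 < P.mult x ↔ x ∈ P.partsSet := by
  simp [mult, partsSet, Finset.card_pos, Finset.filter_nonempty_iff, and_assoc]

theorem mult_eq_zero {x : ℕ} (hx : x ∉ P.partsSet) : P.mult x = 0 :=
  Nat.eq_zero_of_not_pos (mt mult_pos_iff.1 hx)

theorem sum_mult_mul (w : ℕ → ℕ) :
    ∑ x ∈ P.partsSet, P.mult x * w x = ∑ j ∈ Icc 1 P.len, w (P.l j) := by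
  rw [Finset.sum_comp w P.l]
  rfl

theorem exists_consec_of_lt {x y : ℕ} (hx : x ∈ P.partsSet) (hy : y ∈ P.partsSet) (hyx : y < x) :
    ∃ z, Consec P x z ∧ y ≤ z := by
  obtain ⟨z, hz, hmax⟩ := exists_max_image (P.partsSet.filter fun w => y ≤ w ∧ w < x) id
    ⟨y, mem_filter.2 ⟨hy, le_rfl, hyx⟩⟩
  obtain ⟨hzP, hyz, hzx⟩ := mem_filter.1 hz
  refine ⟨z, ⟨hx, hzP, hzx, fun w hw ⟨hzw, hwx⟩ => ?_⟩, hyz⟩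
  exact absurd hzw (not_lt.2 (hmax w (mem_filter.2 ⟨hw, by omega, hwx⟩)))

theorem isMinPart_or_exists_consec {x : ℕ} (hx : x ∈ P.partsSet) :
    IsMinPart P x ∨ ∃ z, Consec P x z := by
  by_cases h : ∃ y ∈ P.partsSet, y < x
  · obtain ⟨y, hy, hyx⟩ := h
    obtain ⟨z, hz, -⟩ := exists_consec_of_lt hx hy hyx
    exact Or.inr ⟨z, hz⟩
  · push Not at h
    exact Or.inl ⟨hx, h⟩

/-- Shortening each row of length `x` to length `σ x` turns a diagram with `g x` rows of length `x`
starting with `+` into one with `P.push σ g y` rows of length `y` starting with `+`. -/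
def push (P : PartitionData) (σ : ℕ → ℕ) (g : ℕ → ℕ) (y : ℕ) : ℕ :=
  if y = 0 then 0 else ∑ x ∈ P.partsSet with σ x = y, g x

variable {σ : ℕ → ℕ}

theorem push_add (g₁ g₂ : ℕ → ℕ) : P.push σ (g₁ + g₂) = P.push σ g₁ + P.push σ g₂ := by
  funext y
  simp only [push, Pi.add_apply]
  split_ifs <;> simp [sum_add_distrib]

theorem push_single {x : ℕ} (hx : x ∈ P.partsSet) (hσx : σ x ≠ 0) :
    P.push σ (Pi.single x 1) = Pi.single (σ x) 1 := by
  funext y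
  simp only [push]
  split_ifs with hy
  · simp [hy, Ne.symm hσx]
  · simp [Pi.single_apply, hx, eq_comm]

theorem push_single_of_eq_zero {x : ℕ} (hσx : σ x = 0) : P.push σ (Pi.single x 1) = 0 := by
  funext y
  simp only [push]
  split_ifs with hy
  · rfl
  · simp [Finset.sum_pi_single', hσx, Ne.symm hy]

theorem push_mono {g g' : ℕ → ℕ} (h : g ≤ g') : P.push σ g ≤ P.push σ g' := by
  intro y
  simp only [push]
  split_ifs
  · exact le_rfl
  · exact sum_le_sum fun x _ => h x

theorem push_tsub {g m : ℕ → ℕ} (h : g ≤ m) : P.push σ (m - g) = P.push σ m - P.push σ g := by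
  rw [eq_tsub_iff_add_eq_of_le (push_mono h), ← push_add, tsub_add_cancel_of_le h]

def plusCount (Q : PartitionData) (g : ℕ → ℕ) : ℕ :=
  ∑ i ∈ Q.partsSet, (g i * ((i + 1) / 2) + (Q.mult i - g i) * (i / 2))

def minusCount (Q : PartitionData) (g : ℕ → ℕ) : ℕ :=
  ∑ i ∈ Q.partsSet, (g i * (i / 2) + (Q.mult i - g i) * ((i + 1) / 2))

/-- Only rows of odd length contribute to the imbalance between `+` and `-` boxes. -/
def oddWeight (Q : PartitionData) (g : ℕ → ℕ) : ℕ :=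
  ∑ i ∈ Q.partsSet, g i * (i % 2)

theorem plusCount_eq {g : ℕ → ℕ} (hg : g ≤ P.mult) :
    P.plusCount g = P.oddWeight g + ∑ i ∈ P.partsSet, P.mult i * (i / 2) := by
  rw [plusCount, oddWeight, ← sum_add_distrib]
  refine sum_congr rfl fun i _ => ?_
  rw [mul_half_add_mul_half, Nat.add_sub_cancel' (hg i)]

theorem minusCount_eq {g : ℕ → ℕ} (hg : g ≤ P.mult) :
    P.minusCount g = P.plusCount (P.mult - g) := by
  refine sum_congr rfl fun i _ => ?_
  rw [Pi.sub_apply, Nat.sub_sub_self (hg i), add_comm]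

theorem plusCount_add_minusCount {g : ℕ → ℕ} (hg : g ≤ P.mult) :
    P.plusCount g + P.minusCount g = P.boxSum := by
  rw [plusCount, minusCount, ← sum_add_distrib, boxSum, ← sum_mult_mul fun i => i]
  refine sum_congr rfl fun i _ => ?_
  obtain ⟨k, hk⟩ := Nat.exists_eq_add_of_le (hg i)
  rw [hk, Nat.add_sub_cancel_left]
  have hi : (i + 1) / 2 + i / 2 = i := by omega
  calc _ = (g i + k) * ((i + 1) / 2 + i / 2) := by ring
    _ = _ := by rw [hi]

theorem oddWeight_add (g₁ g₂ : ℕ → ℕ) :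
    P.oddWeight (g₁ + g₂) = P.oddWeight g₁ + P.oddWeight g₂ := by
  simp only [oddWeight, Pi.add_apply, add_mul, sum_add_distrib]

theorem oddWeight_single {x : ℕ} (hx : x ∈ P.partsSet) : P.oddWeight (Pi.single x 1) = x % 2 := by
  rw [oddWeight, sum_eq_single x (fun i _ hi => by simp [hi]) (fun h => absurd hx h)]
  simp

end PartitionData

open PartitionData

namespace SYD

variable {Q : PartitionData} {p q : ℕ}

theorem ext {T U : SYD Q p q} (h : T.f = U.f) : T = U := by
  cases T
  cases U
  cases h
  rfl

theorem f_le (T : SYD Q p q) : T.f ≤ Q.mult := T.le_mult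

theorem f_eq_zero (T : SYD Q p q) {x : ℕ} (hx : x ∉ Q.partsSet) : T.f x = 0 :=
  Nat.eq_zero_of_le_zero (mult_eq_zero hx ▸ T.le_mult x)

theorem oddWeight_eq (T U : SYD Q p q) : Q.oddWeight T.f = Q.oddWeight U.f := by
  have hT : Q.plusCount T.f = p := T.plus_eq
  have hU : Q.plusCount U.f = p := U.plus_eq
  rw [plusCount_eq T.f_le] at hT
  rw [plusCount_eq U.f_le] at hU
  omega

def ofOddWeight (T : SYD Q p q) (g : ℕ → ℕ) (hg : g ≤ Q.mult)
    (hw : Q.oddWeight g = Q.oddWeight T.f) : SYD Q p q where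
  f := g
  le_mult := hg
  plus_eq := by
    change Q.plusCount g = p
    rw [plusCount_eq hg, hw, ← plusCount_eq T.f_le]
    exact T.plus_eq
  minus_eq := by
    have hplus : Q.plusCount g = Q.plusCount T.f := by
      rw [plusCount_eq hg, hw, ← plusCount_eq T.f_le]
    have hg' := plusCount_add_minusCount hg
    have hT := plusCount_add_minusCount T.f_le
    have hTq : Q.minusCount T.f = q := T.minus_eq
    change Q.minusCount g = q
    omega

theorem mod_two_eq_of_transfer {T U : SYD Q p q} {i j : ℕ} (hi : i ∈ Q.partsSet)
    (hj : j ∈ Q.partsSet) (h : T.f + Pi.single j 1 = U.f + Pi.single i 1) : i % 2 = j % 2 := by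
  have := congrArg Q.oddWeight h
  rw [oddWeight_add, oddWeight_add, oddWeight_single hi, oddWeight_single hj,
    oddWeight_eq T U] at this
  omega

theorem mod_two_eq_zero_of_pump {T U : SYD Q p q} {j : ℕ} (hj : j ∈ Q.partsSet)
    (h : T.f = U.f + Pi.single j 1) : j % 2 = 0 := by
  have := congrArg Q.oddWeight h
  rw [oddWeight_add, oddWeight_single hj, oddWeight_eq T U] at this
  omega

theorem exists_transfer (T : SYD Q p q) {x y : ℕ} (hx : x ∈ Q.partsSet) (hy : y ∈ Q.partsSet)
    (hxy : x ≠ y) (hpar : x % 2 = y % 2) (hTx : 0 < T.f x) (hTy : T.f y < Q.mult y) :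
    ∃ U : SYD Q p q, U.f + Pi.single x 1 = T.f + Pi.single y 1 := by
  have hle : Pi.single x 1 ≤ T.f := by
    intro z
    rw [Pi.single_apply]
    split_ifs with hz
    · exact hz ▸ hTx
    · exact Nat.zero_le _
  obtain ⟨g, hg⟩ : ∃ g, g + Pi.single x 1 = T.f + Pi.single y 1 :=
    ⟨T.f - Pi.single x 1 + Pi.single y 1, by rw [add_right_comm, tsub_add_cancel_of_le hle]⟩
  have hgm : g ≤ Q.mult := by
    intro z
    have hz := congrFun hg z
    have := T.le_mult z
    simp only [Pi.add_apply, Pi.single_apply] at hz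
    show g z ≤ Q.mult z
    split_ifs at hz <;> subst_vars <;> omega
  have hw : Q.oddWeight g = Q.oddWeight T.f := by
    have := congrArg Q.oddWeight hg
    rw [oddWeight_add, oddWeight_add, oddWeight_single hx, oddWeight_single hy, hpar] at this
    omega
  exact ⟨T.ofOddWeight g hgm hw, hg⟩

theorem exists_pump (T : SYD Q p q) {y : ℕ} (hy : y ∈ Q.partsSet) (heven : y % 2 = 0)
    (hTy : T.f y < Q.mult y) : ∃ U : SYD Q p q, U.f = T.f + Pi.single y 1 := by
  have hgm : T.f + Pi.single y 1 ≤ Q.mult := by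
    intro z
    have := T.le_mult z
    show T.f z + (Pi.single y 1 : ℕ → ℕ) z ≤ Q.mult z
    rw [Pi.single_apply]
    split_ifs with hz
    · exact hz ▸ hTy
    · omega
  have hw : Q.oddWeight (T.f + Pi.single y 1) = Q.oddWeight T.f := by
    rw [oddWeight_add, oddWeight_single hy, heven, add_zero]
  exact ⟨T.ofOddWeight _ hgm hw, rfl⟩

end SYD

theorem add_single_eq_add_single_iff {f g : ℕ → ℕ} {i j : ℕ} (hij : i ≠ j) :
    f + Pi.single j 1 = g + Pi.single i 1 ↔
      (∀ x, x ≠ i → x ≠ j → f x = g x) ∧ f i = g i + 1 ∧ g j = f j + 1 := by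
  constructor
  · intro h
    refine ⟨fun x hxi hxj => ?_, ?_, ?_⟩
    · simpa [Pi.single_apply, hxi, hxj] using congrFun h x
    · simpa [Pi.single_apply, hij] using congrFun h i
    · simpa [Pi.single_apply, hij.symm] using (congrFun h j).symm
  · rintro ⟨hoth, hi, hj⟩
    funext x
    by_cases hxi : x = i
    · subst hxi; simp [hi, hij]
    by_cases hxj : x = j
    · subst hxj; simp [hj, hxi]
    · simp [hoth x hxi hxj, hxi, hxj]

theorem eq_add_single_iff {f g : ℕ → ℕ} {j : ℕ} :
    f = g + Pi.single j 1 ↔ (∀ x, x ≠ j → f x = g x) ∧ f j = g j + 1 := by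
  constructor
  · intro h
    exact ⟨fun x hx => by simp [h, hx], by simp [h]⟩
  · rintro ⟨hoth, hj⟩
    funext x
    by_cases hx : x = j
    · subst hx; simp [hj]
    · simp [hoth x hx, hx]

namespace orbitGraph

variable {Q : PartitionData} {p q : ℕ}

theorem adj_of_transfer {T U : SYD Q p q} {i j : ℕ} (hc : Consec Q i j)
    (h : T.f + Pi.single j 1 = U.f + Pi.single i 1) : (orbitGraph Q p q).Adj T U := by
  obtain ⟨hoth, hi, hj⟩ := (add_single_eq_add_single_iff hc.2.2.1.ne').1 h
  refine (SimpleGraph.fromRel_adj _ _ _).2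
    ⟨fun hTU => ?_, Or.inl (Or.inl ⟨i, j, hc, hoth, Or.inl ⟨hi, hj⟩⟩)⟩
  rw [hTU] at hi
  omega

theorem adj_of_pump {T U : SYD Q p q} {j : ℕ} (hj : IsMinPart Q j)
    (h : T.f = U.f + Pi.single j 1) : (orbitGraph Q p q).Adj T U := by
  obtain ⟨hoth, hjj⟩ := eq_add_single_iff.1 h
  refine (SimpleGraph.fromRel_adj _ _ _).2
    ⟨fun hTU => ?_, Or.inl (Or.inr ⟨j, hj, hoth, Or.inl hjj⟩)⟩
  rw [hTU] at hjj
  omega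

theorem adj_rec {R : SYD Q p q → SYD Q p q → Prop} (hsymm : ∀ T U, R T U → R U T)
    (htransfer : ∀ T U i j, Consec Q i j → T.f + Pi.single j 1 = U.f + Pi.single i 1 → R T U)
    (hpump : ∀ T U j, IsMinPart Q j → T.f = U.f + Pi.single j 1 → R T U)
    {T U : SYD Q p q} (h : (orbitGraph Q p q).Adj T U) : R T U := by
  have key : ∀ T U, AdjRel Q 1 T U → R T U := by
    rintro T U (⟨i, j, hc, hoth, ⟨hi, hj⟩ | ⟨hi, hj⟩⟩ | ⟨j, hm, hoth, hj | hj⟩)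
    · exact htransfer T U i j hc ((add_single_eq_add_single_iff hc.2.2.1.ne').2 ⟨hoth, hi, hj⟩)
    · exact hsymm _ _ (htransfer U T i j hc ((add_single_eq_add_single_iff hc.2.2.1.ne').2
        ⟨fun x hxi hxj => (hoth x hxi hxj).symm, hi, hj⟩))
    · exact hpump T U j hm (eq_add_single_iff.2 ⟨hoth, hj⟩)
    · exact hsymm _ _ (hpump U T j hm (eq_add_single_iff.2 ⟨fun x hx => (hoth x hx).symm, hj⟩))
  obtain ⟨-, hTU | hUT⟩ := (SimpleGraph.fromRel_adj _ _ _).1 h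
  · exact key T U hTU
  · exact hsymm _ _ (key U T hUT)

end orbitGraph

namespace orbitGraph

variable {Q : PartitionData} {p q : ℕ}

theorem exists_adj_transfer {x y : ℕ} (hc : Consec Q x y ∨ Consec Q y x) (T : SYD Q p q)
    (hpar : x % 2 = y % 2) (hTx : 0 < T.f x) (hTy : T.f y < Q.mult y) :
    ∃ U : SYD Q p q, U.f + Pi.single x 1 = T.f + Pi.single y 1 ∧ (orbitGraph Q p q).Adj T U := by
  have hxQ : x ∈ Q.partsSet := by rcases hc with hc | hc; exacts [hc.1, hc.2.1]
  have hyQ : y ∈ Q.partsSet := by rcases hc with hc | hc; exacts [hc.2.1, hc.1]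
  have hxy : x ≠ y := by rcases hc with hc | hc; exacts [hc.2.2.1.ne', hc.2.2.1.ne]
  obtain ⟨U, hU⟩ := T.exists_transfer hxQ hyQ hxy hpar hTx hTy
  refine ⟨U, hU, ?_⟩
  rcases hc with hc | hc
  · exact adj_of_transfer hc hU.symm
  · exact (adj_of_transfer hc hU).symm

theorem exists_reachable_transfer {x y : ℕ} (hx : x ∈ Q.partsSet) (hy : y ∈ Q.partsSet)
    (hyx : y < x) (hpar : ∀ z ∈ Q.partsSet, y ≤ z → z ≤ x → z % 2 = x % 2) (T : SYD Q p q)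
    (hTx : 0 < T.f x) (hTy : T.f y < Q.mult y) :
    ∃ U : SYD Q p q, U.f + Pi.single x 1 = T.f + Pi.single y 1 ∧
      (orbitGraph Q p q).Reachable T U := by
  induction x using Nat.strong_induction_on generalizing T with | _ x ih => ?_
  obtain ⟨z, hc, hyz⟩ := exists_consec_of_lt hx hy hyx
  have hzQ := hc.2.1
  have hzx := hc.2.2.1
  have hpz : x % 2 = z % 2 := (hpar z hzQ hyz hzx.le).symm
  rcases hyz.eq_or_lt with rfl | hyz
  · obtain ⟨U, hU, hadj⟩ := exists_adj_transfer (Or.inl hc) T hpz hTx hTy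
    exact ⟨U, hU, hadj.reachable⟩
  have hpar' : ∀ w ∈ Q.partsSet, y ≤ w → w ≤ z → w % 2 = z % 2 :=
    fun w hw hyw hwz => (hpar w hw hyw (hwz.trans hzx.le)).trans hpz
  -- pass the box on to `z` first, or, if every row of length `z` already starts with `+`, pass
  -- one from `z` down to `y` first
  rcases (T.le_mult z).lt_or_eq with hTz | hTz
  · obtain ⟨U₁, hU₁, hadj⟩ := exists_adj_transfer (Or.inl hc) T hpz hTx hTz
    have h₁ := congrFun hU₁ z
    have h₂ := congrFun hU₁ y
    simp only [Pi.add_apply, Pi.single_eq_same, Pi.single_eq_of_ne hzx.ne,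
      Pi.single_eq_of_ne (hyz.trans hzx).ne, Pi.single_eq_of_ne hyz.ne, add_zero] at h₁ h₂
    obtain ⟨U, hU, hreach⟩ := ih z hzx hzQ hyz hpar' U₁ (by omega) (by omega)
    refine ⟨U, add_right_cancel (b := Pi.single z 1) ?_, hadj.reachable.trans hreach⟩
    rw [add_right_comm, hU, add_right_comm, hU₁, add_right_comm]
  · obtain ⟨U₁, hU₁, hreach⟩ := ih z hzx hzQ hyz hpar' T
      (hTz ▸ mult_pos_iff.2 hzQ) hTy
    have h₁ := congrFun hU₁ z
    have h₂ := congrFun hU₁ x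
    simp only [Pi.add_apply, Pi.single_eq_same, Pi.single_eq_of_ne hzx.ne',
      Pi.single_eq_of_ne (hyz.trans hzx).ne', Pi.single_eq_of_ne hyz.ne', add_zero] at h₁ h₂
    obtain ⟨U, hU, hadj⟩ := exists_adj_transfer (Or.inl hc) U₁ hpz (by omega) (by omega)
    exact ⟨U, hU.trans hU₁, hreach.trans hadj.reachable⟩

theorem exists_reachable_pump {y : ℕ} (hy : y ∈ Q.partsSet)
    (heven : ∀ z ∈ Q.partsSet, z ≤ y → z % 2 = 0) (T : SYD Q p q) (hTy : T.f y < Q.mult y) :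
    ∃ U : SYD Q p q, U.f = T.f + Pi.single y 1 ∧ (orbitGraph Q p q).Reachable T U := by
  induction y using Nat.strong_induction_on generalizing T with | _ y ih => ?_
  rcases isMinPart_or_exists_consec hy with hmin | ⟨z, hc⟩
  · obtain ⟨U, hU⟩ := T.exists_pump hy (heven y hy le_rfl) hTy
    exact ⟨U, hU, (adj_of_pump hmin hU).symm.reachable⟩
  have hzQ := hc.2.1
  have hzy := hc.2.2.1
  have hpz : z % 2 = y % 2 := by rw [heven z hzQ hzy.le, heven y hy le_rfl]
  have heven' : ∀ w ∈ Q.partsSet, w ≤ z → w % 2 = 0 :=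
    fun w hw hwz => heven w hw (hwz.trans hzy.le)
  -- flip a row of length `z` and pass its `+` up to `y`, in whichever order leaves room at `z`
  rcases (T.le_mult z).lt_or_eq with hTz | hTz
  · obtain ⟨U₁, hU₁, hreach⟩ := ih z hzy hzQ heven' T hTz
    have h₁ := congrFun hU₁ z
    have h₂ := congrFun hU₁ y
    simp only [Pi.add_apply, Pi.single_eq_same, Pi.single_eq_of_ne hzy.ne', add_zero] at h₁ h₂
    obtain ⟨U, hU, hadj⟩ := exists_adj_transfer (Or.inr hc) U₁ hpz (by omega) (by omega)
    refine ⟨U, add_right_cancel (b := Pi.single z 1) ?_, hreach.trans hadj.reachable⟩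
    rw [hU, hU₁, add_right_comm]
  · obtain ⟨U₁, hU₁, hadj⟩ := exists_adj_transfer (Or.inr hc) T hpz
      (hTz ▸ mult_pos_iff.2 hzQ) hTy
    have h₁ := congrFun hU₁ z
    simp only [Pi.add_apply, Pi.single_eq_same, Pi.single_eq_of_ne hzy.ne, add_zero] at h₁
    obtain ⟨U, hU, hreach⟩ := ih z hzy hzQ heven' U₁ (by omega)
    exact ⟨U, hU.trans hU₁, hadj.reachable.trans hreach⟩

end orbitGraph

namespace SimpleGraph

variable {V W : Type*} {G : SimpleGraph V} {H : SimpleGraph W}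

theorem Reachable.map_of_adj (φ : V → W) (hadj : ∀ a b, G.Adj a b → H.Reachable (φ a) (φ b))
    {a b : V} (h : G.Reachable a b) : H.Reachable (φ a) (φ b) := by
  obtain ⟨w⟩ := h
  induction w with
  | nil => rfl
  | cons h _ ih => exact (hadj _ _ h).trans ih

theorem Reachable.of_map (φ : V → W) (hfiber : ∀ a b, φ a = φ b → G.Reachable a b)
    (hlift : ∀ a' b', H.Adj a' b' → ∃ a b, φ a = a' ∧ φ b = b' ∧ G.Reachable a b)
    {a b : V} (h : H.Reachable (φ a) (φ b)) : G.Reachable a b := by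
  obtain ⟨w⟩ := h
  suffices ∀ {u v} (w : H.Walk u v) (a b : V), φ a = u → φ b = v → G.Reachable a b from
    this w a b rfl rfl
  intro u v w
  induction w with
  | nil => exact fun a b ha hb => hfiber a b (ha.trans hb.symm)
  | cons hadj _ ih =>
    intro a b ha hb
    obtain ⟨a₁, b₁, ha₁, hb₁, hr⟩ := hlift _ _ hadj
    exact (hfiber a a₁ (ha.trans ha₁.symm)).trans (hr.trans (ih b₁ b hb₁ hb))

theorem card_connectedComponent_eq_of_surjective (φ : V → W) (hφ : Function.Surjective φ)
    (hreach : ∀ a b, H.Reachable (φ a) (φ b) ↔ G.Reachable a b) :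
    Nat.card G.ConnectedComponent = Nat.card H.ConnectedComponent := by
  let F : G.ConnectedComponent → H.ConnectedComponent :=
    Quot.lift (fun v => H.connectedComponentMk (φ v))
      fun a b h => ConnectedComponent.sound ((hreach a b).2 h)
  refine Nat.card_congr (Equiv.ofBijective F ⟨fun c d => ?_, fun c => ?_⟩)
  · induction c, d using ConnectedComponent.ind₂ with
    | _ a b => exact fun h => ConnectedComponent.sound ((hreach a b).1 (ConnectedComponent.exact h))
  · induction c using ConnectedComponent.ind with
    | _ w =>
      obtain ⟨v, rfl⟩ := hφ w
      exact ⟨G.connectedComponentMk v, rfl⟩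

end SimpleGraph

theorem Finset.exists_le_sum_eq {ι : Type*} [DecidableEq ι] (s : Finset ι) (m : ι → ℕ) {a : ℕ}
    (ha : a ≤ ∑ i ∈ s, m i) : ∃ g ≤ m, ∑ i ∈ s, g i = a := by
  induction s using Finset.induction_on generalizing a with
  | empty =>
    rw [sum_empty] at ha
    exact ⟨0, fun _ => Nat.zero_le _, by rw [sum_empty]; omega⟩
  | insert b s hb ih =>
    rw [sum_insert hb] at ha
    obtain ⟨g, hg, hsum⟩ := ih (a := a - min a (m b)) (by omega)
    refine ⟨Function.update g b (min a (m b)), fun i => ?_, ?_⟩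
    · rcases eq_or_ne i b with rfl | hi
      · simp
      · simpa [hi] using hg i
    · rw [sum_insert hb, Function.update_self,
        sum_congr rfl fun i hi => Function.update_of_ne (ne_of_mem_of_not_mem hi hb) _ _, hsum]
      omega

namespace PartitionData

variable {P : PartitionData} {σ : ℕ → ℕ}

theorem push_single_eq_push_single {x y : ℕ} (hx : x ∈ P.partsSet) (hy : y ∈ P.partsSet)
    (hxy : σ x = σ y) : P.push σ (Pi.single x 1) = P.push σ (Pi.single y 1) := by
  by_cases h0 : σ x = 0
  · rw [push_single_of_eq_zero h0, push_single_of_eq_zero (hxy ▸ h0)]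
  · rw [push_single hx h0, push_single hy (hxy ▸ h0), hxy]

theorem exists_pos_of_push_pos {g : ℕ → ℕ} {y : ℕ} (h : 0 < P.push σ g y) :
    ∃ x ∈ P.partsSet, σ x = y ∧ 0 < g x := by
  rw [push] at h
  split_ifs at h
  · exact absurd h (lt_irrefl 0)
  · obtain ⟨x, hx, hgx⟩ := sum_pos_iff.1 h
    exact ⟨x, (mem_filter.1 hx).1, (mem_filter.1 hx).2, hgx⟩

theorem exists_lt_of_push_lt {g m : ℕ → ℕ} {y : ℕ} (h : P.push σ g y < P.push σ m y) :
    ∃ x ∈ P.partsSet, σ x = y ∧ g x < m x := by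
  rw [push, push] at h
  split_ifs at h
  · exact absurd h (lt_irrefl 0)
  · obtain ⟨x, hx, hgx⟩ := exists_lt_of_sum_lt h
    exact ⟨x, (mem_filter.1 hx).1, (mem_filter.1 hx).2, hgx⟩

theorem exists_lt_of_push_eq {g g' : ℕ → ℕ} (h : P.push σ g = P.push σ g') {x : ℕ}
    (hx : x ∈ P.partsSet) (hx0 : σ x ≠ 0) (hlt : g x < g' x) :
    ∃ y ∈ P.partsSet, σ y = σ x ∧ g' y < g y := by
  by_contra! hle
  have hsum := congrFun h (σ x)
  simp only [push, if_neg hx0] at hsum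
  exact (sum_lt_sum (fun y hy => hle y (mem_filter.1 hy).1 (mem_filter.1 hy).2)
    ⟨x, mem_filter.2 ⟨hx, rfl⟩, hlt⟩).ne hsum

/-- Each row of length `x` loses `(x - σ x) / 2` boxes of either sign. -/
def removedPairs (P : PartitionData) (σ : ℕ → ℕ) : ℕ :=
  ∑ x ∈ P.partsSet, P.mult x * ((x - σ x) / 2)

end PartitionData

/-- `P'` arises from `P` by shortening each row of length `x` to length `σ x`, by an even number
of boxes and without changing the order of the rows. -/
structure RowShortening (P P' : PartitionData) (σ : ℕ → ℕ) : Prop where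
  mult_eq : P'.mult = P.push σ P.mult
  monotoneOn : MonotoneOn σ P.partsSet
  le : ∀ x ∈ P.partsSet, σ x ≤ x
  mod_two : ∀ x ∈ P.partsSet, σ x % 2 = x % 2

namespace RowShortening

variable {P P' : PartitionData} {σ : ℕ → ℕ} (S : RowShortening P P' σ)
include S

theorem map_mem {x : ℕ} (hx : x ∈ P.partsSet) (hσx : σ x ≠ 0) : σ x ∈ P'.partsSet := by
  rw [← mult_pos_iff, S.mult_eq, push, if_neg hσx]
  exact (mult_pos_iff.2 hx).trans_le
    (single_le_sum (fun _ _ => Nat.zero_le _) (mem_filter.2 ⟨hx, rfl⟩))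

theorem exists_of_mem {y : ℕ} (hy : y ∈ P'.partsSet) : ∃ x ∈ P.partsSet, σ x = y := by
  rw [← mult_pos_iff, S.mult_eq] at hy
  obtain ⟨x, hx, hσx, -⟩ := exists_pos_of_push_pos hy
  exact ⟨x, hx, hσx⟩

theorem push_le_mult {g : ℕ → ℕ} (hg : g ≤ P.mult) : P.push σ g ≤ P'.mult :=
  S.mult_eq ▸ push_mono hg

theorem sum_push_mul (g w : ℕ → ℕ) (hw : w 0 = 0) :
    ∑ y ∈ P'.partsSet, P.push σ g y * w y = ∑ x ∈ P.partsSet, g x * w (σ x) := by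
  calc ∑ y ∈ P'.partsSet, P.push σ g y * w y
      = ∑ y ∈ P'.partsSet, ∑ x ∈ P.partsSet with σ x = y, g x * w (σ x) := by
        refine sum_congr rfl fun y hy => ?_
        rw [push, if_neg (pos_of_mem_partsSet hy).ne', sum_mul]
        exact sum_congr rfl fun x hx => by rw [(mem_filter.1 hx).2]
    _ = ∑ x ∈ P.partsSet with σ x ∈ P'.partsSet, g x * w (σ x) :=
        sum_fiberwise_eq_sum_filter _ _ _ _
    _ = ∑ x ∈ P.partsSet, g x * w (σ x) := by
        refine sum_filter_of_ne fun x hx hne => ?_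
        by_contra hσx
        have : σ x = 0 := by_contra fun h => hσx (S.map_mem hx h)
        rw [this, hw, mul_zero] at hne
        exact hne rfl

theorem plusCount_push_add {g : ℕ → ℕ} (hg : g ≤ P.mult) :
    P'.plusCount (P.push σ g) + P.removedPairs σ = P.plusCount g := by
  have hrest : P'.mult - P.push σ g = P.push σ (P.mult - g) := by
    rw [push_tsub hg, S.mult_eq]
  have hP' : P'.plusCount (P.push σ g) =
      ∑ x ∈ P.partsSet, (g x * ((σ x + 1) / 2) + (P.mult x - g x) * (σ x / 2)) := by
    rw [plusCount, sum_add_distrib, sum_add_distrib, S.sum_push_mul g (fun y => (y + 1) / 2) rfl]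
    simp only [← Pi.sub_apply P'.mult, hrest]
    rw [S.sum_push_mul _ (fun y => y / 2) rfl]
    rfl
  rw [hP', removedPairs, ← sum_add_distrib, plusCount]
  refine sum_congr rfl fun x hx => ?_
  rw [mul_half_add_mul_half_of_le _ _ _ _ (S.le x hx) (S.mod_two x hx),
    Nat.add_sub_cancel' (hg x)]

theorem minusCount_push_add {g : ℕ → ℕ} (hg : g ≤ P.mult) :
    P'.minusCount (P.push σ g) + P.removedPairs σ = P.minusCount g := by
  rw [minusCount_eq hg, ← S.plusCount_push_add tsub_le_self, minusCount_eq (S.push_le_mult hg),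
    push_tsub hg, S.mult_eq]

variable {p q : ℕ}

def map (T : SYD P p q) : SYD P' (p - P.removedPairs σ) (q - P.removedPairs σ) where
  f := P.push σ T.f
  le_mult := S.push_le_mult T.f_le
  plus_eq := by
    have h := S.plusCount_push_add T.f_le
    have hT : P.plusCount T.f = p := T.plus_eq
    change P'.plusCount _ = _
    omega
  minus_eq := by
    have h := S.minusCount_push_add T.f_le
    have hT : P.minusCount T.f = q := T.minus_eq
    change P'.minusCount _ = _
    omega

theorem map_f (T : SYD P p q) : (S.map T).f = P.push σ T.f := rfl

theorem exists_push_eq {g' : ℕ → ℕ} (hg' : g' ≤ P'.mult) : ∃ g ≤ P.mult, P.push σ g = g' := by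
  have hfiber : ∀ y, ∃ G ≤ P.mult, y ≠ 0 → ∑ x ∈ P.partsSet with σ x = y, G x = g' y := by
    intro y
    by_cases hy : y = 0
    · exact ⟨0, fun _ => Nat.zero_le _, fun h => absurd hy h⟩
    · have hle := hg' y
      rw [S.mult_eq, push, if_neg hy] at hle
      obtain ⟨G, hG, hsum⟩ := exists_le_sum_eq _ P.mult hle
      exact ⟨G, hG, fun _ => hsum⟩
  choose G hG hsum using hfiber
  refine ⟨fun x => G (σ x) x, fun x => hG (σ x) x, funext fun y => ?_⟩
  rw [push]
  split_ifs with hy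
  · subst hy
    have h0 : g' 0 ≤ P'.mult 0 := hg' 0
    rw [mult_eq_zero fun h => (pos_of_mem_partsSet h).ne' rfl] at h0
    omega
  · rw [← hsum y hy]
    exact sum_congr rfl fun x hx => by rw [(mem_filter.1 hx).2]

theorem exists_map_eq (hn : P.boxSum = p + q)
    (T' : SYD P' (p - P.removedPairs σ) (q - P.removedPairs σ)) :
    ∃ T : SYD P p q, S.map T = T' := by
  obtain ⟨g, hg, hpush⟩ := S.exists_push_eq T'.f_le
  have hplus := S.plusCount_push_add hg
  have hminus := S.minusCount_push_add hg
  have htot := plusCount_add_minusCount hg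
  have h₁ : P'.plusCount T'.f = p - P.removedPairs σ := T'.plus_eq
  have h₂ : P'.minusCount T'.f = q - P.removedPairs σ := T'.minus_eq
  rw [hpush] at hplus hminus
  exact ⟨⟨g, hg, by change P.plusCount g = p; omega, by change P.minusCount g = q; omega⟩,
    SYD.ext hpush⟩

end RowShortening

theorem sum_dist_lt_of_eq_add_single {s : Finset ℕ} {f f₁ g : ℕ → ℕ} {a : ℕ} (ha : a ∈ s)
    (h : f₁ = f + Pi.single a 1) (hlt : f a < g a) :
    ∑ z ∈ s, Nat.dist (f₁ z) (g z) < ∑ z ∈ s, Nat.dist (f z) (g z) := by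
  refine sum_lt_sum (fun z _ => ?_) ⟨a, ha, ?_⟩
  · rw [h, Pi.add_apply, Pi.single_apply]
    split_ifs <;> subst_vars <;> simp only [Nat.dist, add_zero] <;> omega
  · rw [h, Pi.add_apply, Pi.single_eq_same]
    simp only [Nat.dist]
    omega

theorem sum_dist_lt_of_add_single_eq {s : Finset ℕ} {f f₁ g : ℕ → ℕ} {a b : ℕ} (ha : a ∈ s)
    (hab : a ≠ b) (h : f₁ + Pi.single a 1 = f + Pi.single b 1) (hga : g a < f a)
    (hfb : f b < g b) : ∑ z ∈ s, Nat.dist (f₁ z) (g z) < ∑ z ∈ s, Nat.dist (f z) (g z) := by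
  refine sum_lt_sum (fun z _ => ?_) ⟨a, ha, ?_⟩
  · have hz := congrFun h z
    simp only [Pi.add_apply, Pi.single_apply] at hz
    simp only [Nat.dist]
    split_ifs at hz <;> subst_vars <;> omega
  · have hz := congrFun h a
    simp only [Pi.add_apply, Pi.single_eq_same, Pi.single_eq_of_ne hab] at hz
    simp only [Nat.dist]
    omega

namespace RowShortening

variable {P P' : PartitionData} {σ : ℕ → ℕ} (S : RowShortening P P' σ)
include S

theorem consec_map {i j : ℕ} (hc : Consec P i j) (hj : σ j ≠ 0) (hji : σ j < σ i) :
    Consec P' (σ i) (σ j) := by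
  refine ⟨S.map_mem hc.1 (by omega), S.map_mem hc.2.1 hj, hji, fun y hy ⟨hjy, hyi⟩ => ?_⟩
  obtain ⟨w, hw, rfl⟩ := S.exists_of_mem hy
  rcases le_or_gt w j with hwj | hjw
  · exact absurd (S.monotoneOn hw hc.2.1 hwj) (not_le.2 hjy)
  rcases le_or_gt i w with hiw | hwi
  · exact absurd (S.monotoneOn hc.1 hw hiw) (not_le.2 hyi)
  · exact hc.2.2.2 w hw ⟨hjw, hwi⟩

theorem isMinPart_map_of_consec {i j : ℕ} (hc : Consec P i j) (hj : σ j = 0) (hi : σ i ≠ 0) :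
    IsMinPart P' (σ i) := by
  refine ⟨S.map_mem hc.1 hi, fun y hy => ?_⟩
  obtain ⟨w, hw, rfl⟩ := S.exists_of_mem hy
  rcases le_or_gt w j with hwj | hjw
  · have := S.monotoneOn hw hc.2.1 hwj
    exact absurd (pos_of_mem_partsSet hy) (by omega)
  · refine S.monotoneOn hc.1 hw (not_lt.1 fun hwi => hc.2.2.2 w hw ⟨hjw, hwi⟩)

theorem isMinPart_map {j : ℕ} (hm : IsMinPart P j) (hj : σ j ≠ 0) : IsMinPart P' (σ j) := by
  refine ⟨S.map_mem hm.1 hj, fun y hy => ?_⟩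
  obtain ⟨w, hw, rfl⟩ := S.exists_of_mem hy
  exact S.monotoneOn hm.1 hw (hm.2 w hw)

variable {p q : ℕ}

theorem reachable_map_of_adj {T U : SYD P p q} (h : (orbitGraph P p q).Adj T U) :
    (orbitGraph P' _ _).Reachable (S.map T) (S.map U) := by
  refine orbitGraph.adj_rec (R := fun T U => (orbitGraph P' _ _).Reachable (S.map T) (S.map U))
    (fun _ _ h => h.symm) (fun T U i j hc hTU => ?_) (fun T U j hm hTU => ?_) h
  · have hpush := congrArg (P.push σ) hTU
    rw [push_add, push_add] at hpush
    rcases (S.monotoneOn hc.2.1 hc.1 hc.2.2.1.le).eq_or_lt with hij | hji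
    · rw [push_single_eq_push_single hc.2.1 hc.1 hij] at hpush
      rw [SYD.ext (add_right_cancel hpush : (S.map T).f = (S.map U).f)]
    by_cases hj : σ j = 0
    · rw [push_single_of_eq_zero hj, add_zero, push_single hc.1 (by omega)] at hpush
      exact (orbitGraph.adj_of_pump (S.isMinPart_map_of_consec hc hj (by omega)) hpush).reachable
    · rw [push_single hc.2.1 hj, push_single hc.1 (by omega)] at hpush
      exact (orbitGraph.adj_of_transfer (S.consec_map hc hj hji) hpush).reachable
  · have hpush := congrArg (P.push σ) hTU
    rw [push_add] at hpush
    by_cases hj : σ j = 0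
    · rw [push_single_of_eq_zero hj, add_zero] at hpush
      have : S.map T = S.map U := SYD.ext hpush
      rw [this]
    · rw [push_single hm.1 hj] at hpush
      exact (orbitGraph.adj_of_pump (S.isMinPart_map hm hj) hpush).reachable

/-- The parts between two parts with the same image all have that image, hence one parity. -/
theorem mod_two_of_between {x y z : ℕ} (hx : x ∈ P.partsSet) (hy : y ∈ P.partsSet)
    (hz : z ∈ P.partsSet) (hσ : σ x = σ y) (hxz : x ≤ z) (hzy : z ≤ y) : z % 2 = y % 2 := by
  have h₁ := S.monotoneOn hx hz hxz
  have h₂ := S.monotoneOn hz hy hzy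
  rw [← S.mod_two z hz, ← S.mod_two y hy]
  congr 1
  omega

theorem exists_reachable_closer {T U : SYD P p q} (hTU : P.push σ T.f = P.push σ U.f) {x : ℕ}
    (hx : x ∈ P.partsSet) (hlt : T.f x < U.f x) :
    ∃ T₁ U₁ : SYD P p q, (orbitGraph P p q).Reachable T T₁ ∧ (orbitGraph P p q).Reachable U U₁ ∧
      P.push σ T₁.f = P.push σ U₁.f ∧ ∑ z ∈ P.partsSet, Nat.dist (T₁.f z) (U₁.f z) <
        ∑ z ∈ P.partsSet, Nat.dist (T.f z) (U.f z) := by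
  have hUx := U.le_mult x
  by_cases hx0 : σ x = 0
  · have heven : ∀ z ∈ P.partsSet, z ≤ x → z % 2 = 0 := fun z hz hzx => by
      have := S.monotoneOn hz hx hzx
      rw [← S.mod_two z hz]
      omega
    obtain ⟨T₁, hT₁, hr⟩ := orbitGraph.exists_reachable_pump hx heven T (by omega)
    refine ⟨T₁, U, hr, .rfl, ?_, sum_dist_lt_of_eq_add_single hx hT₁ hlt⟩
    rw [hT₁, push_add, push_single_of_eq_zero hx0, add_zero, hTU]
  obtain ⟨y, hy, hσy, hUy⟩ := exists_lt_of_push_eq hTU hx hx0 hlt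
  have hTy := T.le_mult y
  rcases lt_or_gt_of_ne (show x ≠ y by rintro rfl; omega) with hxy | hyx
  · obtain ⟨T₁, hT₁, hr⟩ := orbitGraph.exists_reachable_transfer hy hx hxy
      (fun z hz hxz hzy => S.mod_two_of_between hx hy hz hσy.symm hxz hzy) T (by omega) (by omega)
    refine ⟨T₁, U, hr, .rfl, ?_, sum_dist_lt_of_add_single_eq hy hxy.ne' hT₁ hUy hlt⟩
    have hpush := congrArg (P.push σ) hT₁
    rw [push_add, push_add, push_single_eq_push_single hy hx hσy] at hpush
    rw [add_right_cancel hpush, hTU]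
  · obtain ⟨U₁, hU₁, hr⟩ := orbitGraph.exists_reachable_transfer hx hy hyx
      (fun z hz hyz hzx => S.mod_two_of_between hy hx hz hσy hyz hzx) U (by omega) (by omega)
    refine ⟨T, U₁, .rfl, hr, ?_, ?_⟩
    · have hpush := congrArg (P.push σ) hU₁
      rw [push_add, push_add, push_single_eq_push_single hx hy hσy.symm] at hpush
      rw [add_right_cancel hpush, hTU]
    · have := sum_dist_lt_of_add_single_eq hx hyx.ne' hU₁ hlt hUy
      simpa only [Nat.dist_comm (T.f _)] using this

theorem reachable_of_push_eq {T U : SYD P p q} (hTU : P.push σ T.f = P.push σ U.f) :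
    (orbitGraph P p q).Reachable T U := by
  suffices ∀ n (T U : SYD P p q), ∑ z ∈ P.partsSet, Nat.dist (T.f z) (U.f z) < n →
      P.push σ T.f = P.push σ U.f → (orbitGraph P p q).Reachable T U from
    this _ T U (Nat.lt_succ_self _) hTU
  intro n
  induction n with
  | zero => exact fun T U h => absurd h (Nat.not_lt_zero _)
  | succ n ih =>
    intro T U hlt hTU
    by_cases heq : ∀ x ∈ P.partsSet, T.f x = U.f x
    · have : T = U := SYD.ext <| funext fun x => by
        by_cases hx : x ∈ P.partsSet
        · exact heq x hx
        · rw [T.f_eq_zero hx, U.f_eq_zero hx]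
      rw [this]
    push Not at heq
    obtain ⟨x, hx, hne⟩ := heq
    rcases lt_or_gt_of_ne hne with h | h
    · obtain ⟨T₁, U₁, hT, hU, hpush, hd⟩ := S.exists_reachable_closer hTU hx h
      exact hT.trans ((ih T₁ U₁ (by omega) hpush).trans hU.symm)
    · obtain ⟨U₁, T₁, hU, hT, hpush, hd⟩ := S.exists_reachable_closer hTU.symm hx h
      simp only [Nat.dist_comm (U₁.f _), Nat.dist_comm (U.f _)] at hd
      exact hT.trans ((ih T₁ U₁ (by omega) hpush.symm).trans hU.symm)

end RowShortening

namespace RowShortening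

variable {P P' : PartitionData} {σ : ℕ → ℕ} (S : RowShortening P P' σ) {p q : ℕ}
include S

theorem exists_reachable_lift_of_transfer (hn : P.boxSum = p + q)
    {T' U' : SYD P' (p - P.removedPairs σ) (q - P.removedPairs σ)} {i j : ℕ}
    (hc : Consec P' i j) (hTU : T'.f + Pi.single j 1 = U'.f + Pi.single i 1) :
    ∃ T U : SYD P p q, S.map T = T' ∧ S.map U = U' ∧ (orbitGraph P p q).Reachable T U := by
  have hpar := SYD.mod_two_eq_of_transfer hc.1 hc.2.1 hTU
  obtain ⟨-, hi, hj⟩ := (add_single_eq_add_single_iff hc.2.2.1.ne').1 hTU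
  have hUj : U'.f j ≤ P'.mult j := U'.le_mult j
  obtain ⟨T, rfl⟩ := S.exists_map_eq hn T'
  obtain ⟨x, hx, rfl, hTx⟩ := exists_pos_of_push_pos (σ := σ) (g := T.f) (y := i)
    (by rw [← S.map_f]; omega)
  obtain ⟨y, hy, rfl, hTy⟩ := exists_lt_of_push_lt (σ := σ) (g := T.f) (m := P.mult) (y := j)
    (by rw [← S.map_f, ← S.mult_eq]; omega)
  have hyx : y < x := lt_of_not_ge fun hxy => absurd (S.monotoneOn hx hy hxy) (not_le.2 hc.2.2.1)
  have hy0 := pos_of_mem_partsSet hc.2.1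
  -- every part between `y` and `x` is sent to `σ y` or `σ x`, consecutive parts of `P'`
  have hpar' : ∀ z ∈ P.partsSet, y ≤ z → z ≤ x → z % 2 = x % 2 := by
    intro z hz hyz hzx
    have h₁ := S.monotoneOn hy hz hyz
    have h₂ := S.monotoneOn hz hx hzx
    have hσz : σ z = σ x ∨ σ z = σ y := by
      by_contra! hne
      exact hc.2.2.2 (σ z) (S.map_mem hz (by omega)) ⟨by omega, by omega⟩
    rw [← S.mod_two z hz, ← S.mod_two x hx]
    rcases hσz with h | h <;> rw [h]
    exact hpar.symm
  obtain ⟨U, hU, hr⟩ := orbitGraph.exists_reachable_transfer hx hy hyx hpar' T hTx hTy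
  refine ⟨T, U, rfl, SYD.ext ?_, hr⟩
  have hpush := congrArg (P.push σ) hU
  rw [push_add, push_add, push_single hx (pos_of_mem_partsSet hc.1).ne',
    push_single hy hy0.ne'] at hpush
  exact add_right_cancel (hpush.trans hTU)

theorem exists_reachable_lift_of_pump (hn : P.boxSum = p + q)
    {T' U' : SYD P' (p - P.removedPairs σ) (q - P.removedPairs σ)} {j : ℕ}
    (hm : IsMinPart P' j) (hTU : T'.f = U'.f + Pi.single j 1) :
    ∃ T U : SYD P p q, S.map T = T' ∧ S.map U = U' ∧ (orbitGraph P p q).Reachable T U := by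
  have heven := SYD.mod_two_eq_zero_of_pump hm.1 hTU
  obtain ⟨-, hj⟩ := eq_add_single_iff.1 hTU
  have hTj : T'.f j ≤ P'.mult j := T'.le_mult j
  obtain ⟨U, rfl⟩ := S.exists_map_eq hn U'
  obtain ⟨y, hy, rfl, hUy⟩ := exists_lt_of_push_lt (σ := σ) (g := U.f) (m := P.mult) (y := j)
    (by rw [← S.map_f, ← S.mult_eq]; omega)
  have heven' : ∀ z ∈ P.partsSet, z ≤ y → z % 2 = 0 := by
    intro z hz hzy
    have hle := S.monotoneOn hz hy hzy
    rw [← S.mod_two z hz]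
    by_cases hz0 : σ z = 0
    · rw [hz0]
    · rw [le_antisymm hle (hm.2 _ (S.map_mem hz hz0)), heven]
  obtain ⟨T, hT, hr⟩ := orbitGraph.exists_reachable_pump hy heven' U hUy
  refine ⟨T, U, SYD.ext ?_, rfl, hr.symm⟩
  rw [S.map_f, hT, push_add, push_single hy (pos_of_mem_partsSet hm.1).ne', hTU, S.map_f]

theorem exists_reachable_lift_of_adj (hn : P.boxSum = p + q)
    {T' U' : SYD P' (p - P.removedPairs σ) (q - P.removedPairs σ)}
    (h : (orbitGraph P' _ _).Adj T' U') :
    ∃ T U : SYD P p q, S.map T = T' ∧ S.map U = U' ∧ (orbitGraph P p q).Reachable T U :=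
  orbitGraph.adj_rec
    (R := fun T' U' => ∃ T U : SYD P p q, S.map T = T' ∧ S.map U = U' ∧
      (orbitGraph P p q).Reachable T U)
    (fun _ _ ⟨T, U, hT, hU, hr⟩ => ⟨U, T, hU, hT, hr.symm⟩)
    (fun _ _ _ _ hc hTU => S.exists_reachable_lift_of_transfer hn hc hTU)
    (fun _ _ _ hm hTU => S.exists_reachable_lift_of_pump hn hm hTU) h

theorem card_connectedComponent_eq (hn : P.boxSum = p + q) :
    Nat.card (orbitGraph P p q).ConnectedComponent =
      Nat.card (orbitGraph P' (p - P.removedPairs σ)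
        (q - P.removedPairs σ)).ConnectedComponent :=
  SimpleGraph.card_connectedComponent_eq_of_surjective S.map (S.exists_map_eq hn) fun _ _ =>
    ⟨.of_map S.map (fun _ _ h => S.reachable_of_push_eq (congrArg SYD.f h))
      (fun _ _ h => S.exists_reachable_lift_of_adj hn h),
    .map_of_adj S.map fun _ _ h => S.reachable_map_of_adj h⟩

end RowShortening

theorem PartitionData.mult_eq_push_of_l_eq {P P' : PartitionData} {σ : ℕ → ℕ} (hσ : σ 0 = 0)
    (hl : ∀ j, 1 ≤ j → P'.l j = σ (P.l j)) : P'.mult = P.push σ P.mult := by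
  funext y
  rw [push]
  split_ifs with hy
  · exact mult_eq_zero fun h => (pos_of_mem_partsSet h).ne' hy
  have hfilter : {j ∈ Icc 1 P'.len | P'.l j = y} = {j ∈ Icc 1 P.len | σ (P.l j) = y} := by
    ext j
    simp only [mem_filter, mem_Icc]
    constructor
    · rintro ⟨⟨hj, -⟩, hjy⟩
      rw [hl j hj] at hjy
      refine ⟨⟨hj, (P.pos j hj).1 (Nat.pos_of_ne_zero fun h0 => hy ?_)⟩, hjy⟩
      rw [← hjy, h0, hσ]
    · rintro ⟨⟨hj, -⟩, hjy⟩
      exact ⟨⟨hj, (P'.pos j hj).1 (by rw [hl j hj, hjy]; omega)⟩, by rw [hl j hj, hjy]⟩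
  rw [mult, hfilter, card_filter, ← sum_mult_mul fun x => if σ x = y then 1 else 0, sum_filter]
  simp only [mul_ite, mul_one, mul_zero]

def shortenAbove (t x : ℕ) : ℕ := if t < x then x - 2 else x

section RemoveColumns

variable {P P' : PartitionData} {h : ℕ}

theorem add_two_le_l (hcol : P.l (h + 1) + 2 ≤ P.l h) {j : ℕ} (hj : 1 ≤ j) (hjh : j ≤ h) :
    P.l (h + 1) + 2 ≤ P.l j :=
  hcol.trans (l_antitone hj hjh)

theorem l_eq_shortenAbove (hcol : P.l (h + 1) + 2 ≤ P.l h)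
    (hl1 : ∀ j, 1 ≤ j → j ≤ h → P'.l j = P.l j - 2) (hl2 : ∀ j, h < j → P'.l j = P.l j)
    {j : ℕ} (hj : 1 ≤ j) : P'.l j = shortenAbove (P.l (h + 1)) (P.l j) := by
  rw [shortenAbove]
  rcases le_or_gt j h with hjh | hjh
  · rw [hl1 j hj hjh, if_pos (by have := add_two_le_l hcol hj hjh; omega)]
  · rw [hl2 j hjh, if_neg (not_lt.2 (l_antitone (by omega) hjh))]

theorem le_or_add_two_le_of_mem (hcol : P.l (h + 1) + 2 ≤ P.l h) {x : ℕ}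
    (hx : x ∈ P.partsSet) : x ≤ P.l (h + 1) ∨ P.l (h + 1) + 2 ≤ x := by
  obtain ⟨j, hj, -, rfl⟩ := mem_partsSet.1 hx
  rcases le_or_gt j h with hjh | hjh
  · exact Or.inr (add_two_le_l hcol hj hjh)
  · exact Or.inl (l_antitone (by omega) hjh)

theorem rowShortening_shortenAbove (hcol : P.l (h + 1) + 2 ≤ P.l h)
    (hl1 : ∀ j, 1 ≤ j → j ≤ h → P'.l j = P.l j - 2) (hl2 : ∀ j, h < j → P'.l j = P.l j) :
    RowShortening P P' (shortenAbove (P.l (h + 1))) where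
  mult_eq := mult_eq_push_of_l_eq (by simp [shortenAbove]) fun _ hj =>
    l_eq_shortenAbove hcol hl1 hl2 hj
  monotoneOn x hx y hy hxy := by
    have := le_or_add_two_le_of_mem hcol hx
    have := le_or_add_two_le_of_mem hcol hy
    simp only [shortenAbove]
    split_ifs <;> omega
  le x _ := by
    simp only [shortenAbove]
    split_ifs <;> omega
  mod_two x hx := by
    have := le_or_add_two_le_of_mem hcol hx
    simp only [shortenAbove]
    split_ifs <;> omega

theorem removedPairs_shortenAbove (hcol : P.l (h + 1) + 2 ≤ P.l h) :
    P.removedPairs (shortenAbove (P.l (h + 1))) = h := by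
  have hlen : h ≤ P.len := by
    rcases Nat.eq_zero_or_pos h with rfl | hh
    · exact Nat.zero_le _
    · exact (P.pos h hh).1 (by omega)
  rw [removedPairs, sum_mult_mul fun x => (x - shortenAbove (P.l (h + 1)) x) / 2]
  calc ∑ j ∈ Icc 1 P.len, (P.l j - shortenAbove (P.l (h + 1)) (P.l j)) / 2
      = ∑ j ∈ Icc 1 P.len, if j ≤ h then 1 else 0 := by
        refine sum_congr rfl fun j hj => ?_
        have hj1 := (mem_Icc.1 hj).1
        simp only [shortenAbove]
        rcases le_or_gt j h with hjh | hjh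
        · have := add_two_le_l hcol hj1 hjh
          rw [if_pos (by omega), if_pos hjh]
          omega
        · have := l_antitone (P := P) (by omega : 1 ≤ h + 1) hjh
          rw [if_neg (by omega), if_neg (by omega), Nat.sub_self]
    _ = h := by
        rw [← card_filter, show {j ∈ Icc 1 P.len | j ≤ h} = Icc 1 h by
          ext j; simp only [mem_filter, mem_Icc]; omega,
          Nat.card_Icc, Nat.add_sub_cancel]

end RemoveColumns

theorem stmt7_general (P P' : PartitionData) (p q h : ℕ)
    (hn : P.boxSum = p + q)
    (hcol : P.l (h + 1) + 2 ≤ P.l h)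
    (hl1 : ∀ j, 1 ≤ j → j ≤ h → P'.l j = P.l j - 2)
    (hl2 : ∀ j, h < j → P'.l j = P.l j) :
    Nat.card (orbitGraph P p q).ConnectedComponent =
      Nat.card (orbitGraph P' (p - h) (q - h)).ConnectedComponent := by
  rw [← removedPairs_shortenAbove hcol]
  exact (rowShortening_shortenAbove hcol hl1 hl2).card_connectedComponent_eq hn

/-- Removing two successive columns of the same length `h` from `λ` (so
`λ' = (λ_1 - 2, …, λ_h - 2, λ_{h+1}, …, λ_ℓ)`, discarding zero parts) does not
change the number of connected components of the orbit graph, the signature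
changing from `(p, q)` to `(p - h, q - h)`. -/
theorem stmt7 (P P' : PartitionData) (p q h : ℕ)
    (hn : P.boxSum = p + q) (h1 : 1 ≤ h) (hle : h ≤ P.len)
    (hcol : P.l (h + 1) + 2 ≤ P.l h)
    (hl1 : ∀ j, 1 ≤ j → j ≤ h → P'.l j = P.l j - 2)
    (hl2 : ∀ j, h < j → P'.l j = P.l j) :
    Nat.card (orbitGraph P p q).ConnectedComponent =
      Nat.card (orbitGraph P' (p - h) (q - h)).ConnectedComponent :=
  stmt7_general P P' p q h hn hcol hl1 hl2
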